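/- arXiv:1602.01501 — 4 statements merged into one kernel-verified Lean document; each statement's English description precedes it below -/
import Mathlib

section
/- (Lemma 3.2, generator bound.) For every x ∈ (0,1)^N it holds that Σ_{i=1}^N [ (1/(1−x_i) − 1/x_i)·(β s_i(x)(1−x_i) − δ x_i) + (1/2)·(1/(1−x_i)² + 1/x_i²)·σ_i(x_i)²·s_i(x)²·(1−x_i)² ] ≤ N·[ β(N−1) + δ + M²(N−1)² ]. In particular the generator of the stochastic SIS system applied to V(x) = −Σ_i log(x_i(1−x_i)) is bounded above on (0,1)^N by the finite constant K = N[β(N−1) + δ + M²(N−1)²]. -/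
/-!
Each summand only involves `u = xᵢ ∈ (0,1)` and `s = sᵢ(x)`. The drift part equals
`β s + δ - (β s (1-u)/u + δ u/(1-u))`, so it is at most `β s + δ`; in the diffusion part the
noise bound `σᵢ(u) ≤ M u` cancels the `1/u²` singularity, leaving at most
`M² s² (u² + (1-u)²) / 2 ≤ M² s²`. Since `A` has entries in `{0,1}` and zero diagonal,
`0 ≤ s ≤ N - 1`, which bounds every summand by `β (N-1) + δ + M² (N-1)²`.
-/

open Finset

lemma drift_term_le {β δ u s : ℝ} (hβ : 0 ≤ β) (hδ : 0 ≤ δ) (hs : 0 ≤ s)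
    (hu0 : 0 < u) (hu1 : u < 1) :
    (1 / (1 - u) - 1 / u) * (β * s * (1 - u) - δ * u) ≤ β * s + δ := by
  have h1u : 0 < 1 - u := by linarith
  have hexpand : (1 / (1 - u) - 1 / u) * (β * s * (1 - u) - δ * u)
      = β * s + δ - (β * s * (1 - u) / u + δ * u / (1 - u)) := by
    field_simp
    ring
  have hpos : 0 ≤ β * s * (1 - u) / u + δ * u / (1 - u) := by positivity
  linarith

lemma diffusion_term_le {M u s σu : ℝ} (hu0 : 0 < u) (hu1 : u < 1)
    (hσ0 : 0 ≤ σu) (hσ : σu ≤ M * u) :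
    (1 / 2) * (1 / (1 - u) ^ 2 + 1 / u ^ 2) * σu ^ 2 * s ^ 2 * (1 - u) ^ 2 ≤ M ^ 2 * s ^ 2 := by
  have h1u : 0 < 1 - u := by linarith
  have hsimp : (1 / 2) * (1 / (1 - u) ^ 2 + 1 / u ^ 2) * σu ^ 2 * s ^ 2 * (1 - u) ^ 2
      = (σu / u) ^ 2 * s ^ 2 * ((u ^ 2 + (1 - u) ^ 2) / 2) := by
    field_simp
  have hratio : (σu / u) ^ 2 ≤ M ^ 2 := by
    gcongr
    rwa [div_le_iff₀ hu0]
  have hweight : (u ^ 2 + (1 - u) ^ 2) / 2 ≤ 1 := by nlinarith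
  rw [hsimp]
  calc (σu / u) ^ 2 * s ^ 2 * ((u ^ 2 + (1 - u) ^ 2) / 2)
      ≤ M ^ 2 * s ^ 2 * 1 := by gcongr
    _ = M ^ 2 * s ^ 2 := mul_one _

lemma generator_summand_le {β δ M u s σu B : ℝ} (hβ : 0 ≤ β) (hδ : 0 ≤ δ)
    (hu0 : 0 < u) (hu1 : u < 1) (hs0 : 0 ≤ s) (hsB : s ≤ B)
    (hσ0 : 0 ≤ σu) (hσ : σu ≤ M * u) :
    (1 / (1 - u) - 1 / u) * (β * s * (1 - u) - δ * u)
      + (1 / 2) * (1 / (1 - u) ^ 2 + 1 / u ^ 2) * σu ^ 2 * s ^ 2 * (1 - u) ^ 2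
    ≤ β * B + δ + M ^ 2 * B ^ 2 := by
  have hdrift := drift_term_le hβ hδ hs0 hu0 hu1
  have hdiff := diffusion_term_le (s := s) hu0 hu1 hσ0 hσ
  have hβs : β * s ≤ β * B := by gcongr
  have hMs : M ^ 2 * s ^ 2 ≤ M ^ 2 * B ^ 2 := by gcongr
  linarith

section NeighbourSum

variable {ι : Type*} [Fintype ι] {A : ι → ι → ℝ} {x : ι → ℝ}

lemma neighbour_sum_nonneg (hA : ∀ i j, 0 ≤ A i j) (hx : ∀ j, 0 ≤ x j) (i : ι) :
    0 ≤ ∑ j, A i j * x j :=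
  sum_nonneg fun j _ => mul_nonneg (hA i j) (hx j)

lemma neighbour_sum_le_card_sub_one [DecidableEq ι]
    (hA1 : ∀ i j, A i j ≤ 1) (hdiag : ∀ i, A i i = 0)
    (hx0 : ∀ j, 0 ≤ x j) (hx1 : ∀ j, x j ≤ 1) (i : ι) :
    ∑ j, A i j * x j ≤ (Fintype.card ι : ℝ) - 1 := by
  rw [← sum_erase univ (f := fun j => A i j * x j) (a := i) (by simp [hdiag i])]
  calc ∑ j ∈ univ.erase i, A i j * x j
      ≤ ∑ _j ∈ univ.erase i, (1 : ℝ) :=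
        sum_le_sum fun j _ => mul_le_one₀ (hA1 i j) (hx0 j) (hx1 j)
    _ = (Fintype.card ι : ℝ) - 1 := by
        rw [sum_const, card_erase_of_mem (mem_univ i), card_univ, nsmul_one,
          Nat.cast_pred (Fintype.card_pos_iff.mpr ⟨i⟩)]

end NeighbourSum

theorem stmt1_general (N : ℕ)
    (A : Matrix (Fin N) (Fin N) ℝ)
    (hA01 : ∀ i j, A i j = 0 ∨ A i j = 1) (hdiag : ∀ i, A i i = 0)
    (β δ M : ℝ) (hβ : 0 ≤ β) (hδ : 0 ≤ δ)
    (σ : Fin N → ℝ → ℝ) (hσ0 : ∀ i t, 0 ≤ σ i t)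
    (hσ : ∀ i, ∀ t ∈ Set.Ioo (0:ℝ) 1, σ i t ≤ M * t)
    (x : Fin N → ℝ) (hx : ∀ i, x i ∈ Set.Ioo (0:ℝ) 1) :
    ∑ i, ((1 / (1 - x i) - 1 / x i) *
        (β * (∑ j, A i j * x j) * (1 - x i) - δ * x i)
      + (1 / 2) * (1 / (1 - x i) ^ 2 + 1 / (x i) ^ 2) *
        (σ i (x i)) ^ 2 * (∑ j, A i j * x j) ^ 2 * (1 - x i) ^ 2)
    ≤ (N : ℝ) * (β * ((N : ℝ) - 1) + δ + M ^ 2 * ((N : ℝ) - 1) ^ 2) := by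
  have hA0 : ∀ i j, 0 ≤ A i j := fun i j => by rcases hA01 i j with h | h <;> simp [h]
  have hA1 : ∀ i j, A i j ≤ 1 := fun i j => by rcases hA01 i j with h | h <;> simp [h]
  have hx0 : ∀ j, 0 ≤ x j := fun j => (hx j).1.le
  have hx1 : ∀ j, x j ≤ 1 := fun j => (hx j).2.le
  have hsum := sum_le_card_nsmul univ _ _ fun i (_ : i ∈ univ) =>
    generator_summand_le hβ hδ (hx i).1 (hx i).2 (neighbour_sum_nonneg hA0 hx0 i)
      (neighbour_sum_le_card_sub_one hA1 hdiag hx0 hx1 i) (hσ0 i (x i)) (hσ i (x i) (hx i))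
  simpa only [card_univ, Fintype.card_fin, nsmul_eq_mul] using hsum

/-- Lemma 3.2 (generator bound): for every `x ∈ (0,1)^N`, the generator of the
stochastic SIS system applied to `V(x) = -∑ log(xᵢ(1-xᵢ))` is bounded above by
`K = N (β (N-1) + δ + M² (N-1)²)`. -/
theorem stmt1 (N : ℕ) (hN : 1 ≤ N)
    (A : Matrix (Fin N) (Fin N) ℝ) (hsymm : A.IsSymm)
    (hA01 : ∀ i j, A i j = 0 ∨ A i j = 1) (hdiag : ∀ i, A i i = 0)
    (β δ M : ℝ) (hβ : 0 ≤ β) (hδ : 0 ≤ δ) (hM : 0 ≤ M)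
    (σ : Fin N → ℝ → ℝ) (hσ0 : ∀ i t, 0 ≤ σ i t)
    (hσ : ∀ i, ∀ t ∈ Set.Ioo (0:ℝ) 1, σ i t ≤ M * t)
    (x : Fin N → ℝ) (hx : ∀ i, x i ∈ Set.Ioo (0:ℝ) 1) :
    ∑ i, ((1 / (1 - x i) - 1 / x i) *
        (β * (∑ j, A i j * x j) * (1 - x i) - δ * x i)
      + (1 / 2) * (1 / (1 - x i) ^ 2 + 1 / (x i) ^ 2) *
        (σ i (x i)) ^ 2 * (∑ j, A i j * x j) ^ 2 * (1 - x i) ^ 2)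
    ≤ (N : ℝ) * (β * ((N : ℝ) - 1) + δ + M ^ 2 * ((N : ℝ) - 1) ^ 2) :=
  stmt1_general N A hA01 hdiag β δ M hβ hδ σ hσ0 hσ x hx
end

section
/- Let β, δ, s ≥ 0. For every x ∈ (0,1), ((2x−1)/(x(1−x)))·(β s (1−x) − δ x) ≤ β s + δ − 2·√(δ β s). Moreover, if β s > 0 and δ > 0, this bound is attained: at x_m = √(β s)/(√(β s)+√δ) ∈ (0,1) the left-hand side equals β s + δ − 2√(δ β s). -/
/-!
Writing `βs = u²` and `δ = v²` with `u, v ≥ 0`, clearing denominators gives the identity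
`((2x-1)/(x(1-x)))(u²(1-x) - v²x) = (u - v)² - (u(1-x) - vx)² / (x(1-x))`,
and `(u - v)² = βs + δ - 2√(δβs)`. On `(0,1)` the subtracted square is nonnegative, and it
vanishes exactly when `u(1-x) = vx`, i.e. at `x = u/(u+v)`.
-/

open Set

lemma two_mul_sub_one_div_mul_eq_sq_sub {x : ℝ} (hx₀ : x ≠ 0) (hx₁ : 1 - x ≠ 0) (u v : ℝ) :
    (2 * x - 1) / (x * (1 - x)) * (u ^ 2 * (1 - x) - v ^ 2 * x)
      = (u - v) ^ 2 - (u * (1 - x) - v * x) ^ 2 / (x * (1 - x)) := by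
  field_simp
  ring

lemma two_mul_sub_one_div_mul_le_sq_sub (u v : ℝ) {x : ℝ} (hx : x ∈ Ioo (0 : ℝ) 1) :
    (2 * x - 1) / (x * (1 - x)) * (u ^ 2 * (1 - x) - v ^ 2 * x) ≤ (u - v) ^ 2 := by
  obtain ⟨hx₀, hx₁⟩ := hx
  have hx₁' : 0 < 1 - x := sub_pos.mpr hx₁
  rw [two_mul_sub_one_div_mul_eq_sq_sub hx₀.ne' hx₁'.ne']
  have : 0 ≤ (u * (1 - x) - v * x) ^ 2 / (x * (1 - x)) := by positivity
  linarith

lemma div_add_mem_Ioo {u v : ℝ} (hu : 0 < u) (hv : 0 < v) : u / (u + v) ∈ Ioo (0 : ℝ) 1 :=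
  ⟨by positivity, (div_lt_one (by positivity)).mpr (by linarith)⟩

lemma two_mul_sub_one_div_mul_eq_sq_sub_at_div_add {u v : ℝ} (hu : 0 < u) (hv : 0 < v) :
    let x := u / (u + v)
    (2 * x - 1) / (x * (1 - x)) * (u ^ 2 * (1 - x) - v ^ 2 * x) = (u - v) ^ 2 := by
  intro x
  obtain ⟨hx₀, hx₁⟩ := div_add_mem_Ioo hu hv
  have hbalance : u * (1 - x) - v * x = 0 := by
    simp only [x]
    field_simp
    ring
  rw [two_mul_sub_one_div_mul_eq_sq_sub hx₀.ne' (sub_pos.mpr hx₁).ne', hbalance]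
  simp

/-- For `β, δ, s ≥ 0` and `x ∈ (0,1)`,
`((2x-1)/(x(1-x))) (βs(1-x) - δx) ≤ βs + δ - 2√(δβs)`, and when `βs > 0` and
`δ > 0` the bound is attained at `x_m = √(βs)/(√(βs)+√δ) ∈ (0,1)`. -/
theorem stmt2 (β δ s : ℝ) (hβ : 0 ≤ β) (hδ : 0 ≤ δ) (hs : 0 ≤ s) :
    (∀ x ∈ Set.Ioo (0:ℝ) 1,
      ((2 * x - 1) / (x * (1 - x))) * (β * s * (1 - x) - δ * x)
        ≤ β * s + δ - 2 * Real.sqrt (δ * (β * s)))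
    ∧ (0 < β * s → 0 < δ →
        Real.sqrt (β * s) / (Real.sqrt (β * s) + Real.sqrt δ) ∈ Set.Ioo (0:ℝ) 1
        ∧ (let xm := Real.sqrt (β * s) / (Real.sqrt (β * s) + Real.sqrt δ);
           ((2 * xm - 1) / (xm * (1 - xm))) * (β * s * (1 - xm) - δ * xm)
             = β * s + δ - 2 * Real.sqrt (δ * (β * s)))) := by
  have ha : 0 ≤ β * s := mul_nonneg hβ hs
  generalize β * s = a at ha ⊢
  obtain ⟨u, hu, rfl⟩ : ∃ u, 0 ≤ u ∧ u ^ 2 = a := ⟨√a, Real.sqrt_nonneg a, Real.sq_sqrt ha⟩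
  obtain ⟨v, hv, rfl⟩ : ∃ v, 0 ≤ v ∧ v ^ 2 = δ := ⟨√δ, Real.sqrt_nonneg δ, Real.sq_sqrt hδ⟩
  rw [← mul_pow, Real.sqrt_sq (mul_nonneg hv hu), Real.sqrt_sq hu, Real.sqrt_sq hv,
    show u ^ 2 + v ^ 2 - 2 * (v * u) = (u - v) ^ 2 by ring]
  refine ⟨fun x hx ↦ two_mul_sub_one_div_mul_le_sq_sub u v hx, fun hu₂ hv₂ ↦ ?_⟩
  have hu' : 0 < u := hu.lt_of_ne (sq_pos_iff.mp hu₂).symm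
  have hv' : 0 < v := hv.lt_of_ne (sq_pos_iff.mp hv₂).symm
  exact ⟨div_add_mem_Ioo hu' hv', two_mul_sub_one_div_mul_eq_sq_sub_at_div_add hu' hv'⟩
end

section
/- (Generator estimate for the quadratic Lyapunov function.) Let A be a real symmetric N×N matrix with nonnegative entries and largest eigenvalue λ₁(A), let β, δ ≥ 0, and let σ_i : ℝ → [0,∞) satisfy σ_i(t) ≤ M·t for all t ∈ (0,1). Then for every x ∈ (0,1)^N, with s_i(x) = Σ_j a_ij x_j, one has 2β·Σ_i x_i s_i(x) − 2δ·‖x‖² − 2β·Σ_i x_i² s_i(x) + Σ_i σ_i(x_i)²·(1−x_i)²·s_i(x)² ≤ ( 2β λ₁(A) − 2δ + (M²/16)·λ₁(A)² )·‖x‖². -/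
/-!
For the symmetric matrix `A`, expanding in an orthonormal eigenbasis gives
`xᵀAx ≤ λ₁ ‖x‖²`. Nonnegativity of the entries gives `|vᵀAv| ≤ |v|ᵀA|v|`, so every
eigenvalue lies in `[-λ₁, λ₁]` and hence `‖Ax‖² ≤ λ₁² ‖x‖²`. The remaining terms are handled
coordinatewise: `-2β ∑ xᵢ² sᵢ ≤ 0`, and `σᵢ(xᵢ)(1 - xᵢ) ≤ M xᵢ(1 - xᵢ) ≤ M / 4`.
-/

open Matrix Module.End

namespace LinearMap.IsSymmetric

variable {E : Type*} [NormedAddCommGroup E] [InnerProductSpace ℝ E] [FiniteDimensional ℝ E]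
  {T : E →ₗ[ℝ] E}

theorem real_inner_apply_self_le (hT : T.IsSymmetric) {c : ℝ}
    (hc : ∀ μ, HasEigenvalue T μ → μ ≤ c) (x : E) :
    inner ℝ (T x) x ≤ c * ‖x‖ ^ 2 := by
  set b := hT.eigenvectorBasis rfl
  calc inner ℝ (T x) x = ∑ i, hT.eigenvalues rfl i * b.repr x i ^ 2 := by
        rw [← b.repr.inner_map_map, PiLp.inner_apply]
        simp [b, hT.eigenvectorBasis_apply_self_apply, sq, mul_left_comm]
    _ ≤ ∑ i, c * b.repr x i ^ 2 := by
        gcongr with i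
        exact hc _ (hT.hasEigenvalue_eigenvalues rfl i)
    _ = c * ‖x‖ ^ 2 := by
        simp [← b.sum_sq_inner_right x, b.repr_apply_apply, Finset.mul_sum]

theorem norm_apply_sq_le (hT : T.IsSymmetric) {c : ℝ}
    (hc : ∀ μ, HasEigenvalue T μ → |μ| ≤ c) (x : E) :
    ‖T x‖ ^ 2 ≤ c ^ 2 * ‖x‖ ^ 2 := by
  set b := hT.eigenvectorBasis rfl
  calc ‖T x‖ ^ 2 = ∑ i, hT.eigenvalues rfl i ^ 2 * b.repr x i ^ 2 := by
        rw [← b.sum_sq_inner_right (T x)]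
        simp [← b.repr_apply_apply, b, hT.eigenvectorBasis_apply_self_apply, mul_pow]
    _ ≤ ∑ i, c ^ 2 * b.repr x i ^ 2 := by
        gcongr ∑ _, ?_ * _ with i
        exact sq_le_sq.2 ((hc _ (hT.hasEigenvalue_eigenvalues rfl i)).trans (le_abs_self c))
    _ = c ^ 2 * ‖x‖ ^ 2 := by
        simp [← b.sum_sq_inner_right x, b.repr_apply_apply, Finset.mul_sum]

end LinearMap.IsSymmetric

theorem EuclideanSpace.norm_toLp_sq {n : Type*} [Fintype n] (x : n → ℝ) :
    ‖(WithLp.toLp 2 x : EuclideanSpace ℝ n)‖ ^ 2 = x ⬝ᵥ x := by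
  rw [← real_inner_self_eq_norm_sq, EuclideanSpace.inner_eq_star_dotProduct]
  simp

namespace Matrix

variable {n : Type*} [Fintype n] {A : Matrix n n ℝ}

theorem abs_dotProduct_mulVec_le (hA : ∀ i j, 0 ≤ A i j) (x : n → ℝ) :
    |x ⬝ᵥ A *ᵥ x| ≤ |x| ⬝ᵥ A *ᵥ |x| := by
  simp only [dotProduct, mulVec, Finset.mul_sum]
  refine (Finset.abs_sum_le_sum_abs _ _).trans (Finset.sum_le_sum fun i _ => ?_)
  refine (Finset.abs_sum_le_sum_abs _ _).trans (Finset.sum_le_sum fun j _ => ?_)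
  simp [abs_mul, abs_of_nonneg (hA i j), mul_left_comm]

variable [DecidableEq n]

theorem hasEigenvalue_toEuclideanLin_iff {μ : ℝ} :
    HasEigenvalue (toEuclideanLin A) μ ↔ HasEigenvalue (toLin' A) μ := by
  rw [hasEigenvalue_iff_mem_spectrum, hasEigenvalue_iff_mem_spectrum, spectrum_toLpLin,
    spectrum_toLin']

namespace IsHermitian

theorem dotProduct_mulVec_le (hA : A.IsHermitian) {c : ℝ}
    (hc : ∀ μ, HasEigenvalue (toLin' A) μ → μ ≤ c) (x : n → ℝ) :
    x ⬝ᵥ A *ᵥ x ≤ c * (x ⬝ᵥ x) := by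
  have := (isSymmetric_toEuclideanLin_iff.2 hA).real_inner_apply_self_le
    (fun μ hμ => hc μ (hasEigenvalue_toEuclideanLin_iff.1 hμ)) (WithLp.toLp 2 x)
  simpa [EuclideanSpace.inner_eq_star_dotProduct, EuclideanSpace.norm_toLp_sq] using this

theorem abs_le_of_hasEigenvalue (hA : A.IsHermitian) (hA₀ : ∀ i j, 0 ≤ A i j) {c : ℝ}
    (hc : ∀ μ, HasEigenvalue (toLin' A) μ → μ ≤ c) {μ : ℝ}
    (hμ : HasEigenvalue (toLin' A) μ) : |μ| ≤ c := by
  obtain ⟨v, hv⟩ := hμ.exists_hasEigenvector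
  have hAv : A *ᵥ v = μ • v := by simpa using hv.apply_eq_smul
  have hvv : 0 < v ⬝ᵥ v := dotProduct_self_star_pos_iff.2 hv.2
  have habs : |v| ⬝ᵥ |v| = v ⬝ᵥ v := by simp [dotProduct, ← sq, sq_abs]
  have key : |μ| * (v ⬝ᵥ v) ≤ c * (v ⬝ᵥ v) :=
    calc |μ| * (v ⬝ᵥ v) = |v ⬝ᵥ A *ᵥ v| := by
          rw [hAv, dotProduct_smul, smul_eq_mul, abs_mul, abs_of_pos hvv]
      _ ≤ |v| ⬝ᵥ A *ᵥ |v| := abs_dotProduct_mulVec_le hA₀ v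
      _ ≤ c * (v ⬝ᵥ v) := habs ▸ hA.dotProduct_mulVec_le hc |v|
  exact le_of_mul_le_mul_right key hvv

theorem mulVec_dotProduct_mulVec_le (hA : A.IsHermitian) {c : ℝ}
    (hc : ∀ μ, HasEigenvalue (toLin' A) μ → |μ| ≤ c) (x : n → ℝ) :
    A *ᵥ x ⬝ᵥ A *ᵥ x ≤ c ^ 2 * (x ⬝ᵥ x) := by
  have := (isSymmetric_toEuclideanLin_iff.2 hA).norm_apply_sq_le
    (fun μ hμ => hc μ (hasEigenvalue_toEuclideanLin_iff.1 hμ)) (WithLp.toLp 2 x)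
  simpa [EuclideanSpace.norm_toLp_sq] using this

end IsHermitian

end Matrix

theorem sq_mul_one_sub_sq_le {s t M : ℝ} (hs : 0 ≤ s) (hsM : s ≤ M * t) (ht₀ : 0 ≤ t)
    (ht₁ : t ≤ 1) : s ^ 2 * (1 - t) ^ 2 ≤ M ^ 2 / 16 := by
  have hquarter : (t * (1 - t)) ^ 2 ≤ (1 / 4) ^ 2 :=
    pow_le_pow_left₀ (mul_nonneg ht₀ (by linarith)) (by nlinarith [sq_nonneg (1 - 2 * t)]) 2
  calc s ^ 2 * (1 - t) ^ 2 = (s * (1 - t)) ^ 2 := by ring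
    _ ≤ (M * t * (1 - t)) ^ 2 := by gcongr
    _ = M ^ 2 * (t * (1 - t)) ^ 2 := by ring
    _ ≤ M ^ 2 / 16 := by nlinarith [sq_nonneg M]

theorem stmt6_general (N : ℕ)
    (A : Matrix (Fin N) (Fin N) ℝ)
    (hsymm : A.IsSymm) (hnonneg : ∀ i j, 0 ≤ A i j)
    (lam : ℝ)
    (hMax : ∀ μ : ℝ, Module.End.HasEigenvalue (Matrix.toLin' A) μ → μ ≤ lam)
    (β δ M : ℝ) (hβ : 0 ≤ β)
    (σ : Fin N → ℝ → ℝ) (hσ0 : ∀ i t, 0 ≤ σ i t)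
    (hσ : ∀ i, ∀ t ∈ Set.Ioo (0:ℝ) 1, σ i t ≤ M * t)
    (x : Fin N → ℝ) (hx : ∀ i, x i ∈ Set.Ioo (0:ℝ) 1) :
    2 * β * (∑ i, x i * (∑ j, A i j * x j))
      - 2 * δ * (∑ i, (x i) ^ 2)
      - 2 * β * (∑ i, (x i) ^ 2 * (∑ j, A i j * x j))
      + (∑ i, (σ i (x i)) ^ 2 * (1 - x i) ^ 2 * (∑ j, A i j * x j) ^ 2)
    ≤ (2 * β * lam - 2 * δ + M ^ 2 / 16 * lam ^ 2) * (∑ i, (x i) ^ 2) := by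
  have hA : A.IsHermitian := isHermitian_iff_isSymm.2 hsymm
  set s := A *ᵥ x
  have hs : ∀ i, ∑ j, A i j * x j = s i := fun i => rfl
  simp only [hs]
  have hxx : x ⬝ᵥ x = ∑ i, x i ^ 2 := by simp [dotProduct, sq]
  have hQ : ∑ i, x i * s i ≤ lam * ∑ i, x i ^ 2 := hxx ▸ hA.dotProduct_mulVec_le hMax x
  have hR : ∑ i, s i ^ 2 ≤ lam ^ 2 * ∑ i, x i ^ 2 := by
    simpa [dotProduct, sq, hxx] using
      hA.mulVec_dotProduct_mulVec_le (fun μ => hA.abs_le_of_hasEigenvalue hnonneg hMax) x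
  have hs₀ : ∀ i, 0 ≤ s i := fun i =>
    hs i ▸ Finset.sum_nonneg fun j _ => mul_nonneg (hnonneg i j) (hx j).1.le
  have hP : 0 ≤ ∑ i, x i ^ 2 * s i :=
    Finset.sum_nonneg fun i _ => mul_nonneg (sq_nonneg _) (hs₀ i)
  have hS : ∑ i, σ i (x i) ^ 2 * (1 - x i) ^ 2 * s i ^ 2
      ≤ M ^ 2 / 16 * (lam ^ 2 * ∑ i, x i ^ 2) := by
    grw [← hR, Finset.mul_sum]
    gcongr with i
    exact sq_mul_one_sub_sq_le (hσ0 i _) (hσ i _ (hx i)) (hx i).1.le (hx i).2.le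
  linarith [mul_le_mul_of_nonneg_left hQ hβ, mul_nonneg hβ hP]

/-- Generator estimate for the quadratic Lyapunov function `V(x) = ‖x‖²`:
for `x ∈ (0,1)^N`,
`2β ∑ᵢ xᵢ sᵢ(x) - 2δ‖x‖² - 2β ∑ᵢ xᵢ² sᵢ(x) + ∑ᵢ σᵢ(xᵢ)²(1-xᵢ)² sᵢ(x)²
  ≤ (2β λ₁(A) - 2δ + (M²/16) λ₁(A)²) ‖x‖²`. -/
theorem stmt6 (N : ℕ) (hN : 1 ≤ N)
    (A : Matrix (Fin N) (Fin N) ℝ)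
    (hsymm : A.IsSymm) (hnonneg : ∀ i j, 0 ≤ A i j)
    (lam : ℝ)
    (hEig : Module.End.HasEigenvalue (Matrix.toLin' A) lam)
    (hMax : ∀ μ : ℝ, Module.End.HasEigenvalue (Matrix.toLin' A) μ → μ ≤ lam)
    (β δ M : ℝ) (hβ : 0 ≤ β) (hδ : 0 ≤ δ) (hM : 0 ≤ M)
    (σ : Fin N → ℝ → ℝ) (hσ0 : ∀ i t, 0 ≤ σ i t)
    (hσ : ∀ i, ∀ t ∈ Set.Ioo (0:ℝ) 1, σ i t ≤ M * t)
    (x : Fin N → ℝ) (hx : ∀ i, x i ∈ Set.Ioo (0:ℝ) 1) :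
    2 * β * (∑ i, x i * (∑ j, A i j * x j))
      - 2 * δ * (∑ i, (x i) ^ 2)
      - 2 * β * (∑ i, (x i) ^ 2 * (∑ j, A i j * x j))
      + (∑ i, (σ i (x i)) ^ 2 * (1 - x i) ^ 2 * (∑ j, A i j * x j) ^ 2)
    ≤ (2 * β * lam - 2 * δ + M ^ 2 / 16 * lam ^ 2) * (∑ i, (x i) ^ 2) :=
  stmt6_general N A hsymm hnonneg lam hMax β δ M hβ σ hσ0 hσ x hx
end

section
/- (Strict negativity of the generator of V(x)=‖x‖² below the extinction threshold.) Under the hypotheses of the generator estimate, assume moreover that δ > β·λ₁(A) + (M²/32)·λ₁(A)². Then for every nonzero x ∈ (0,1)^N, 2β·Σ_i x_i s_i(x) − 2δ·‖x‖² − 2β·Σ_i x_i² s_i(x) + Σ_i σ_i(x_i)²·(1−x_i)²·s_i(x)² ≤ C·‖x‖² with C = 2β λ₁(A) − 2δ + (M²/16)·λ₁(A)² < 0; in particular this quantity is strictly negative. -/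
/-!
Write `s = A x`. Since every eigenvalue of the symmetric matrix `A` is at most `λ`, the matrix
`λ • 1 - A` is positive semidefinite, so `⟪x, A x⟫ ≤ λ ‖x‖²`. As `A` has nonnegative entries,
`⟪x, A x⟫ ≥ -⟪|x|, A |x|⟫ ≥ -λ ‖x‖²`, so the spectrum of `A` lies in `[-λ, λ]` and
`‖A x‖² = ⟪x, A² x⟫ ≤ λ² ‖x‖²`. The cubic term `Σ xᵢ² sᵢ` is nonnegative, and
`σᵢ(xᵢ)(1 - xᵢ) ≤ M xᵢ(1 - xᵢ) ≤ M / 4` bounds the noise term by `(M² / 16) ‖A x‖²`.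
The threshold on `δ` says exactly that the resulting constant is negative.
-/

open Matrix
open scoped MatrixOrder

namespace Matrix

variable {n : Type*} [Fintype n] {A : Matrix n n ℝ}

theorem neg_abs_dotProduct_mulVec_abs_le (hA : ∀ i j, 0 ≤ A i j) (v : n → ℝ) :
    -(|v| ⬝ᵥ (A *ᵥ |v|)) ≤ v ⬝ᵥ (A *ᵥ v) := by
  simp only [dotProduct, mulVec, Finset.mul_sum, ← Finset.sum_neg_distrib]
  refine Finset.sum_le_sum fun i _ ↦ Finset.sum_le_sum fun j _ ↦ ?_
  have := neg_abs_le (v i * (A i j * v j))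
  rwa [abs_mul, abs_mul, abs_of_nonneg (hA i j)] at this

variable [DecidableEq n]

theorem hasEigenvalue_toLin'_iff_mem_spectrum {μ : ℝ} :
    Module.End.HasEigenvalue (toLin' A) μ ↔ μ ∈ spectrum ℝ A := by
  rw [Module.End.hasEigenvalue_iff_mem_spectrum, spectrum_toLin']

theorem dotProduct_algebraMap_sub_mulVec (c : ℝ) (v : n → ℝ) :
    v ⬝ᵥ ((algebraMap ℝ (Matrix n n ℝ) c - A) *ᵥ v) = c * (v ⬝ᵥ v) - v ⬝ᵥ (A *ᵥ v) := by
  rw [sub_mulVec, dotProduct_sub, Algebra.algebraMap_eq_smul_one, smul_mulVec, one_mulVec,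
    dotProduct_smul, smul_eq_mul]

theorem le_algebraMap_iff_dotProduct_mulVec_le (hA : A.IsHermitian) {c : ℝ} :
    A ≤ algebraMap ℝ _ c ↔ ∀ v, v ⬝ᵥ (A *ᵥ v) ≤ c * (v ⬝ᵥ v) := by
  have hB : (algebraMap ℝ (Matrix n n ℝ) c - A).IsHermitian :=
    (isHermitian_diagonal _).sub hA
  simp only [le_iff, posSemidef_iff_dotProduct_mulVec, hB, true_and, star_trivial,
    dotProduct_algebraMap_sub_mulVec, sub_nonneg]

theorem algebraMap_le_iff_le_dotProduct_mulVec (hA : A.IsHermitian) {c : ℝ} :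
    algebraMap ℝ _ c ≤ A ↔ ∀ v, c * (v ⬝ᵥ v) ≤ v ⬝ᵥ (A *ᵥ v) := by
  have hB : (A - algebraMap ℝ (Matrix n n ℝ) c).IsHermitian :=
    hA.sub (isHermitian_diagonal _)
  simp only [le_iff, posSemidef_iff_dotProduct_mulVec, hB, true_and, star_trivial]
  refine forall_congr' fun v ↦ ?_
  rw [← neg_sub, neg_mulVec, dotProduct_neg, dotProduct_algebraMap_sub_mulVec]
  constructor <;> intro h <;> linarith

theorem dotProduct_mulVec_le_of_forall_hasEigenvalue_le (hA : A.IsHermitian) {c : ℝ}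
    (h : ∀ μ, Module.End.HasEigenvalue (toLin' A) μ → μ ≤ c) (v : n → ℝ) :
    v ⬝ᵥ (A *ᵥ v) ≤ c * (v ⬝ᵥ v) :=
  (le_algebraMap_iff_dotProduct_mulVec_le hA).1 ((le_algebraMap_iff_spectrum_le hA).2
    fun μ hμ ↦ h μ (hasEigenvalue_toLin'_iff_mem_spectrum.2 hμ)) v

theorem abs_le_of_mem_spectrum_of_nonneg (hA : A.IsHermitian) (hA₀ : ∀ i j, 0 ≤ A i j)
    {c : ℝ} (h : ∀ μ, Module.End.HasEigenvalue (toLin' A) μ → μ ≤ c) :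
    ∀ μ ∈ spectrum ℝ A, |μ| ≤ c := by
  have hlow : algebraMap ℝ _ (-c) ≤ A := by
    refine (algebraMap_le_iff_le_dotProduct_mulVec hA).2 fun v ↦ ?_
    have habs : |v| ⬝ᵥ |v| = v ⬝ᵥ v := by
      simp only [dotProduct, Pi.abs_apply, abs_mul_abs_self]
    have := dotProduct_mulVec_le_of_forall_hasEigenvalue_le hA h |v|
    rw [habs] at this
    linarith [neg_abs_dotProduct_mulVec_abs_le hA₀ v]
  intro μ hμ
  exact abs_le.2 ⟨(algebraMap_le_iff_le_spectrum hA).1 hlow μ hμ,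
    h μ (hasEigenvalue_toLin'_iff_mem_spectrum.2 hμ)⟩

theorem mulVec_dotProduct_mulVec_le (hA : A.IsHermitian) {c : ℝ}
    (h : ∀ μ ∈ spectrum ℝ A, |μ| ≤ c) (v : n → ℝ) :
    (A *ᵥ v) ⬝ᵥ (A *ᵥ v) ≤ c ^ 2 * (v ⬝ᵥ v) := by
  have hsq : A ^ 2 ≤ algebraMap ℝ _ (c ^ 2) := by
    rw [← cfc_pow_id (R := ℝ) A 2 hA]
    exact (cfc_le_algebraMap_iff _ _ A).2 fun μ hμ ↦
      sq_abs μ ▸ pow_le_pow_left₀ (abs_nonneg μ) (h μ hμ) 2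
  have := (le_algebraMap_iff_dotProduct_mulVec_le (hA.pow 2)).1 hsq v
  rwa [pow_two, ← mulVec_mulVec, dotProduct_mulVec, ← mulVec_transpose,
    ← conjTranspose_eq_transpose_of_trivial, hA.eq] at this

end Matrix

theorem sq_mul_one_sub_sq_le_s7 {M t a : ℝ} (ht : t ∈ Set.Ioo 0 1) (ha₀ : 0 ≤ a)
    (ha : a ≤ M * t) : a ^ 2 * (1 - t) ^ 2 ≤ M ^ 2 / 16 := by
  obtain ⟨ht₀, ht₁⟩ := ht
  have hq : t * (1 - t) ≤ 1 / 4 := by nlinarith [sq_nonneg (t - 1 / 2)]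
  have hq₀ : 0 ≤ t * (1 - t) := by nlinarith
  calc a ^ 2 * (1 - t) ^ 2 = (a * (1 - t)) ^ 2 := by ring
    _ ≤ (M * (t * (1 - t))) ^ 2 := by
        have h1t : 0 ≤ 1 - t := sub_nonneg.2 ht₁.le
        refine pow_le_pow_left₀ (mul_nonneg ha₀ h1t) ?_ 2
        rw [← mul_assoc]
        exact mul_le_mul_of_nonneg_right ha h1t
    _ = M ^ 2 * (t * (1 - t)) ^ 2 := by ring
    _ ≤ M ^ 2 * (1 / 4) ^ 2 := by gcongr
    _ = M ^ 2 / 16 := by ring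

theorem stmt7_general (N : ℕ)
    (A : Matrix (Fin N) (Fin N) ℝ)
    (hsymm : A.IsSymm) (hnonneg : ∀ i j, 0 ≤ A i j)
    (lam : ℝ)
    (hMax : ∀ μ : ℝ, Module.End.HasEigenvalue (Matrix.toLin' A) μ → μ ≤ lam)
    (β δ M : ℝ) (hβ : 0 ≤ β)
    (hthr : δ > β * lam + M ^ 2 / 32 * lam ^ 2)
    (σ : Fin N → ℝ → ℝ) (hσ0 : ∀ i t, 0 ≤ σ i t)
    (hσ : ∀ i, ∀ t ∈ Set.Ioo (0:ℝ) 1, σ i t ≤ M * t)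
    (x : Fin N → ℝ) (hx : ∀ i, x i ∈ Set.Ioo (0:ℝ) 1) (hx0 : x ≠ 0) :
    2 * β * (∑ i, x i * (∑ j, A i j * x j))
      - 2 * δ * (∑ i, (x i) ^ 2)
      - 2 * β * (∑ i, (x i) ^ 2 * (∑ j, A i j * x j))
      + (∑ i, (σ i (x i)) ^ 2 * (1 - x i) ^ 2 * (∑ j, A i j * x j) ^ 2)
    ≤ (2 * β * lam - 2 * δ + M ^ 2 / 16 * lam ^ 2) * (∑ i, (x i) ^ 2)
    ∧ 2 * β * lam - 2 * δ + M ^ 2 / 16 * lam ^ 2 < 0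
    ∧ 2 * β * (∑ i, x i * (∑ j, A i j * x j))
      - 2 * δ * (∑ i, (x i) ^ 2)
      - 2 * β * (∑ i, (x i) ^ 2 * (∑ j, A i j * x j))
      + (∑ i, (σ i (x i)) ^ 2 * (1 - x i) ^ 2 * (∑ j, A i j * x j) ^ 2) < 0 := by
  have hA : A.IsHermitian := hsymm
  have hnorm : ∑ i, x i ^ 2 = x ⬝ᵥ x := by simp only [dotProduct, sq]
  have hnorm_Ax : ∑ i, (∑ j, A i j * x j) ^ 2 = (A *ᵥ x) ⬝ᵥ (A *ᵥ x) := by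
    simp only [dotProduct, mulVec, sq]
  have hpos : 0 < x ⬝ᵥ x := by
    simpa using dotProduct_star_self_pos_iff.2 hx0
  have hquad : ∑ i, x i * ∑ j, A i j * x j ≤ lam * (x ⬝ᵥ x) :=
    dotProduct_mulVec_le_of_forall_hasEigenvalue_le hA hMax x
  have hquad_Ax : (A *ᵥ x) ⬝ᵥ (A *ᵥ x) ≤ lam ^ 2 * (x ⬝ᵥ x) :=
    mulVec_dotProduct_mulVec_le hA (abs_le_of_mem_spectrum_of_nonneg hA hnonneg hMax) x
  have hcubic : 0 ≤ ∑ i, x i ^ 2 * ∑ j, A i j * x j :=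
    Finset.sum_nonneg fun i _ ↦ mul_nonneg (sq_nonneg _) <|
      Finset.sum_nonneg fun j _ ↦ mul_nonneg (hnonneg i j) (hx j).1.le
  have hnoise : ∑ i, σ i (x i) ^ 2 * (1 - x i) ^ 2 * (∑ j, A i j * x j) ^ 2
      ≤ M ^ 2 / 16 * ((A *ᵥ x) ⬝ᵥ (A *ᵥ x)) := by
    rw [← hnorm_Ax, Finset.mul_sum]
    exact Finset.sum_le_sum fun i _ ↦ mul_le_mul_of_nonneg_right
      (sq_mul_one_sub_sq_le_s7 (hx i) (hσ0 i (x i)) (hσ i (x i) (hx i))) (sq_nonneg _)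
  have hC : 2 * β * lam - 2 * δ + M ^ 2 / 16 * lam ^ 2 < 0 := by linarith
  refine (fun hbound ↦ ⟨hbound, hC, hbound.trans_lt ?_⟩) ?_
  · rw [hnorm]
    linarith [mul_le_mul_of_nonneg_left hquad (by positivity : (0 : ℝ) ≤ 2 * β),
      mul_le_mul_of_nonneg_left hquad_Ax (by positivity : (0 : ℝ) ≤ M ^ 2 / 16),
      mul_nonneg hβ hcubic]
  · rw [hnorm]
    exact mul_neg_of_neg_of_pos hC hpos

/-- Strict negativity of the generator of `V(x) = ‖x‖²` below the extinction
threshold: if `δ > β λ₁(A) + (M²/32) λ₁(A)²` then, for nonzero `x ∈ (0,1)^N`,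
the generator expression is `≤ C‖x‖²` with `C = 2βλ₁(A) - 2δ + (M²/16)λ₁(A)² < 0`;
in particular it is strictly negative. -/
theorem stmt7 (N : ℕ) (hN : 1 ≤ N)
    (A : Matrix (Fin N) (Fin N) ℝ)
    (hsymm : A.IsSymm) (hnonneg : ∀ i j, 0 ≤ A i j)
    (lam : ℝ)
    (hEig : Module.End.HasEigenvalue (Matrix.toLin' A) lam)
    (hMax : ∀ μ : ℝ, Module.End.HasEigenvalue (Matrix.toLin' A) μ → μ ≤ lam)
    (β δ M : ℝ) (hβ : 0 ≤ β) (hδ : 0 ≤ δ) (hM : 0 ≤ M)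
    (hthr : δ > β * lam + M ^ 2 / 32 * lam ^ 2)
    (σ : Fin N → ℝ → ℝ) (hσ0 : ∀ i t, 0 ≤ σ i t)
    (hσ : ∀ i, ∀ t ∈ Set.Ioo (0:ℝ) 1, σ i t ≤ M * t)
    (x : Fin N → ℝ) (hx : ∀ i, x i ∈ Set.Ioo (0:ℝ) 1) (hx0 : x ≠ 0) :
    2 * β * (∑ i, x i * (∑ j, A i j * x j))
      - 2 * δ * (∑ i, (x i) ^ 2)
      - 2 * β * (∑ i, (x i) ^ 2 * (∑ j, A i j * x j))
      + (∑ i, (σ i (x i)) ^ 2 * (1 - x i) ^ 2 * (∑ j, A i j * x j) ^ 2)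
    ≤ (2 * β * lam - 2 * δ + M ^ 2 / 16 * lam ^ 2) * (∑ i, (x i) ^ 2)
    ∧ 2 * β * lam - 2 * δ + M ^ 2 / 16 * lam ^ 2 < 0
    ∧ 2 * β * (∑ i, x i * (∑ j, A i j * x j))
      - 2 * δ * (∑ i, (x i) ^ 2)
      - 2 * β * (∑ i, (x i) ^ 2 * (∑ j, A i j * x j))
      + (∑ i, (σ i (x i)) ^ 2 * (1 - x i) ^ 2 * (∑ j, A i j * x j) ^ 2) < 0 :=
  stmt7_general N A hsymm hnonneg lam hMax β δ M hβ hthr σ hσ0 hσ x hx hx0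
end
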